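/- arXiv:1304.2678 — 2 statements merged into one kernel-verified Lean document; each statement's English description precedes it below -/
import Mathlib

section
/- Let n be a positive integer with n \equiv 2 (mod 4) and k a positive integer. Then n/2 divides S_k(n) if and only if p-1 does not divide k for every odd prime p dividing n. -/
open Finset

def S (k n : ℕ) : ℕ := ∑ j ∈ Finset.Icc 1 n, j ^ k


lemma sq_dvd_aux (x y : ℤ) : ∀ k : ℕ, y^2 ∣ (x+y)^k - x^k - k * x^(k-1) * y
  | 0 => by simp
  | 1 => by ring_nf; simp
  | (k+2) => by
      obtain ⟨c, hc⟩ := sq_dvd_aux x y (k+1)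
      have h1 : (x+y)^(k+1) = x^(k+1) + (k+1) * x^k * y + y^2 * c := by
        push_cast at hc ⊢; linarith [hc]
      refine ⟨c*x + (k+1)*x^k + y*c, ?_⟩
      have h2 : (x+y)^(k+2) = (x+y) * (x+y)^(k+1) := by ring
      rw [h2, h1]; push_cast; ring

lemma sum_range_mul {M : Type*} [AddCommMonoid M] (a b : ℕ) (g : ℕ → M) :
    ∑ j ∈ range (a*b), g j = ∑ t ∈ range a, ∑ i ∈ range b, g (t*b + i) := by
  induction a with
  | zero => simp
  | succ a ih => rw [Nat.succ_mul, Finset.sum_range_add, ih, Finset.sum_range_succ]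

lemma fermat_aux (p k j : ℕ) (hp : p.Prime) (hdvd : (p-1) ∣ k) (hj : ¬ p ∣ j) :
    (p:ℤ) ∣ (j:ℤ)^k - 1 := by
  haveI : Fact p.Prime := ⟨hp⟩
  have h2 : ((j : ZMod p))^k = 1 := by
    obtain ⟨c, rfl⟩ := hdvd
    rw [pow_mul]
    have hu : (j : ZMod p) ≠ 0 := by
      simpa [ZMod.natCast_eq_zero_iff] using hj
    rw [ZMod.pow_card_sub_one_eq_one hu, one_pow]
  have h3 : (((j:ℤ)^k - 1 : ℤ) : ZMod p) = 0 := by push_cast; rw [h2]; ring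
  exact_mod_cast (ZMod.intCast_zmod_eq_zero_iff_dvd _ p).mp h3

def Up (p k f : ℕ) : ℤ := ∑ j ∈ (range (p^f)).filter (fun j => ¬ p ∣ j), (j:ℤ)^k

lemma U_cong (p k : ℕ) (hp : p.Prime) (hodd : Odd p) (hdvd : (p-1) ∣ k) :
    ∀ f, 1 ≤ f → (p:ℤ)^f ∣ Up p k f + (p:ℤ)^(f-1) := by
  intro f hf
  induction f, hf using Nat.le_induction with
  | base =>
      have hcard : ((range (p^1)).filter (fun j => ¬ p ∣ j)).card = p - 1 := by
        have : (range (p^1)).filter (fun j => ¬ p ∣ j) = (range p).erase 0 := by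
          ext j
          simp only [pow_one, Finset.mem_filter, Finset.mem_range, Finset.mem_erase]
          constructor
          · rintro ⟨hj, hnd⟩; exact ⟨fun h0 => hnd (h0 ▸ dvd_zero p), hj⟩
          · rintro ⟨h0, hj⟩
            exact ⟨hj, fun hd => h0 (Nat.eq_zero_of_dvd_of_lt hd hj)⟩
        rw [this, Finset.card_erase_of_mem (Finset.mem_range.mpr hp.pos), Finset.card_range]
      have hdvd1 : (p:ℤ) ∣ Up p k 1 - ((p-1 : ℕ) : ℤ) := by
        rw [Up, ← hcard, Finset.card_eq_sum_ones]
        push_cast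
        rw [← Finset.sum_sub_distrib]
        exact Finset.dvd_sum (fun j hj => fermat_aux p k j hp hdvd (Finset.mem_filter.mp hj).2)
      have hcast : ((p-1:ℕ):ℤ) = (p:ℤ) - 1 := by
        rw [Nat.cast_sub hp.one_le]; simp
      have : Up p k 1 + (p:ℤ)^(1-1) = (Up p k 1 - ((p-1:ℕ):ℤ)) + (p:ℤ) := by
        rw [hcast]; ring
      rw [pow_one, this]
      exact dvd_add hdvd1 dvd_rfl
  | succ f hf ih =>
      set F := (range (p^f)).filter (fun j => ¬ p ∣ j) with hF
      set A : ℤ := ∑ i ∈ F, (i:ℤ)^(k-1) with hA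
      obtain ⟨hh, hph⟩ : ∃ h, p = 2*h+1 := hodd
      have hpne : (f : ℕ) ≠ 0 := Nat.one_le_iff_ne_zero.mp hf
      have expand : Up p k (f+1) = ∑ t ∈ range p, ∑ i ∈ F, ((t*p^f + i : ℕ):ℤ)^k := by
        rw [Up, Finset.sum_filter, show p^(f+1) = p * p^f by ring, sum_range_mul]
        refine Finset.sum_congr rfl (fun t _ => ?_)
        rw [hF, Finset.sum_filter]
        refine Finset.sum_congr rfl (fun i _ => ?_)
        have ht : p ∣ t * p^f := (dvd_pow_self p hpne).mul_left t
        simp [Nat.dvd_add_right ht]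
      have hkey : ∀ t ∈ range p, ∀ i ∈ F,
          (p:ℤ)^(f+1) ∣ ((t*p^f + i : ℕ):ℤ)^k - (i:ℤ)^k - (k:ℤ)*(i:ℤ)^(k-1)*((t:ℤ)*(p:ℤ)^f) := by
        intro t _ i _
        have hd := sq_dvd_aux (i:ℤ) ((t:ℤ)*(p:ℤ)^f) k
        have hcast : ((t*p^f + i : ℕ):ℤ) = (i:ℤ) + ((t:ℤ)*(p:ℤ)^f) := by push_cast; ring
        rw [hcast]
        refine dvd_trans ?_ hd
        have : ((t:ℤ)*(p:ℤ)^f)^2 = (t:ℤ)^2 * (p:ℤ)^(2*f) := by ring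
        rw [this]
        exact Dvd.dvd.mul_left (pow_dvd_pow _ (by omega)) _
      have hZ : ∀ t:ℕ, ∑ i ∈ F, (k:ℤ)*(i:ℤ)^(k-1)*((t:ℤ)*(p:ℤ)^f) = ((k:ℤ) * A * (p:ℤ)^f) * t := by
        intro t
        rw [← Finset.sum_mul, ← Finset.mul_sum, ← hA]
        ring
      have hUf : ∑ i ∈ F, (i:ℤ)^k = Up p k f := rfl
      have hsum : ∑ t ∈ range p, ∑ i ∈ F,
            (((t*p^f + i : ℕ):ℤ)^k - (i:ℤ)^k - (k:ℤ)*(i:ℤ)^(k-1)*((t:ℤ)*(p:ℤ)^f))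
          = Up p k (f+1) - (p:ℤ) * Up p k f - ((k:ℤ) * A * (p:ℤ)^f) * (∑ t ∈ range p, (t:ℤ)) := by
        simp_rw [Finset.sum_sub_distrib, hZ, hUf]
        rw [← expand, Finset.sum_const, Finset.card_range, ← Finset.mul_sum]
        push_cast
        ring
      have hgauss : (∑ t ∈ range p, (t:ℤ)) = (p:ℤ) * hh := by
        have h2 : (∑ t ∈ range p, (t:ℤ)) * 2 = (p:ℤ) * ((p:ℤ) - 1) := by
          have := Finset.sum_range_id_mul_two p
          have hc : ((∑ t ∈ range p, t : ℕ) : ℤ) * 2 = ((p * (p-1) : ℕ) : ℤ) := by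
            exact_mod_cast congrArg (Nat.cast : ℕ → ℤ) this
          push_cast [Nat.cast_sub hp.one_le] at hc
          push_cast
          linarith [hc]
        have hp1 : ((p:ℕ):ℤ) - 1 = 2*(hh:ℤ) := by rw [hph]; push_cast; ring
        have : (∑ t ∈ range p, (t:ℤ)) * 2 = ((p:ℤ) * hh) * 2 := by
          rw [h2, hp1]; ring
        exact mul_right_cancel₀ (by norm_num) this
      obtain ⟨c1, hc1⟩ := Finset.dvd_sum (fun t ht => Finset.dvd_sum (fun i hi => hkey t ht i hi))
      obtain ⟨c2, hc2⟩ := ih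
      have hpf : (p:ℤ) * (p:ℤ)^(f-1) = (p:ℤ)^f := by
        rw [← pow_succ']
        congr 1
        omega
      refine ⟨c1 + (k:ℤ)*A*hh + c2, ?_⟩
      have hgoal : Up p k (f+1) + (p:ℤ)^(f+1-1) = (p:ℤ)^(f+1) * (c1 + (k:ℤ)*A*hh + c2) := by
        have h1 : Up p k (f+1) = (p:ℤ)^(f+1)*c1 + (p:ℤ) * Up p k f + ((k:ℤ) * A * (p:ℤ)^f) * ((p:ℤ)*hh) := by
          rw [← hgauss, ← hc1, hsum]; ring
        have h2 : (p:ℤ) * Up p k f = (p:ℤ)^(f+1)*c2 - (p:ℤ)^f := by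
          have := congrArg (fun x => (p:ℤ) * x) hc2
          simp only [mul_add] at this
          rw [hpf] at this
          rw [show (p:ℤ)^(f+1) = (p:ℤ)*(p:ℤ)^f by ring]
          linarith [this]
        rw [show f+1-1 = f from rfl, h1, h2]
        ring
      exact hgoal


lemma T_zero_aux (p f k : ℕ) (hp : p.Prime) (hnd : ¬ (p-1) ∣ k) :
    (p:ℤ)^f ∣ ∑ j ∈ range (p^f), (j:ℤ)^k := by
  haveI : Fact p.Prime := ⟨hp⟩
  obtain ⟨g, hg⟩ := IsCyclic.exists_generator (α := (ZMod p)ˣ)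
  have hord : orderOf g = p - 1 := by
    rw [orderOf_eq_card_of_forall_mem_zpowers hg, Nat.card_eq_fintype_card,
      ZMod.card_units_eq_totient, Nat.totient_prime hp]
  have hgk : g^k ≠ 1 := fun h => hnd (hord ▸ orderOf_dvd_of_pow_eq_one h)
  set c : ℕ := (g : ZMod p).val with hc
  have hcg : (c : ZMod p) = (g : ZMod p) := ZMod.natCast_val _ |>.trans (ZMod.cast_id _ _)
  have hpc : ¬ p ∣ c := by
    intro h
    have : (c : ZMod p) = 0 := (ZMod.natCast_eq_zero_iff _ _).mpr h
    rw [hcg] at this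
    exact g.ne_zero this
  have hpck : ¬ p ∣ (c^k - 1) := by
    intro h
    have hc1 : 1 ≤ c^k := Nat.one_le_iff_ne_zero.mpr (pow_ne_zero _ (fun h0 => hpc (h0 ▸ Dvd.intro 0 rfl)))
    have : ((c^k - 1 : ℕ) : ZMod p) = 0 := (ZMod.natCast_eq_zero_iff _ _).mpr h
    rw [Nat.cast_sub hc1] at this
    push_cast at this
    rw [hcg] at this
    have hgk1 : (g : ZMod p)^k = 1 := by linear_combination this
    exact hgk (Units.ext (by push_cast; exact hgk1))
  rcases Nat.eq_zero_or_pos f with rfl | hf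
  · simp
  haveI : NeZero (p^f) := ⟨pow_ne_zero _ hp.pos.ne'⟩
  -- work in ZMod (p^f)
  set m := p^f
  have hu1 : IsUnit (c : ZMod m) := by
    rw [ZMod.isUnit_iff_coprime]
    exact Nat.Coprime.pow_right _ ((Nat.Prime.coprime_iff_not_dvd hp).mpr hpc).symm
  have hu2 : IsUnit ((c : ZMod m)^k - 1) := by
    have hc1 : 1 ≤ c^k := Nat.one_le_iff_ne_zero.mpr (pow_ne_zero _ (fun h0 => hpc (h0 ▸ Dvd.intro 0 rfl)))
    have : ((c^k - 1 : ℕ) : ZMod m) = (c : ZMod m)^k - 1 := by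
      rw [Nat.cast_sub hc1]; push_cast; ring
    rw [← this, ZMod.isUnit_iff_coprime]
    exact Nat.Coprime.pow_right _ ((Nat.Prime.coprime_iff_not_dvd hp).mpr hpck).symm
  set T : ZMod m := ∑ x : ZMod m, x^k with hT
  have hbij : Function.Bijective (fun x : ZMod m => (c : ZMod m) * x) :=
    Finite.injective_iff_bijective.mp (fun a b h => hu1.mul_left_cancel h)
  have hTT : (c : ZMod m)^k * T = T := by
    rw [hT, Finset.mul_sum]
    simp_rw [← mul_pow]
    exact Fintype.sum_bijective _ hbij _ _ (fun x => rfl)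
  have hT0 : T = 0 := by
    have : ((c : ZMod m)^k - 1) * T = 0 := by rw [sub_mul, hTT]; ring
    exact (IsUnit.mul_right_eq_zero hu2).mp this
  -- transfer to ℤ
  have hcast : ((∑ j ∈ range m, (j:ℤ)^k : ℤ) : ZMod m) = T := by
    push_cast
    refine Finset.sum_nbij' (fun j => (j : ZMod m)) (fun x => x.val) ?_ ?_ ?_ ?_ ?_
    · intros; exact Finset.mem_univ _
    · intro x _; exact Finset.mem_range.mpr (ZMod.val_lt x)
    · intro j hj; exact ZMod.val_cast_of_lt (Finset.mem_range.mp hj)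
    · intro x _; simp [ZMod.natCast_val, ZMod.cast_id]
    · intro j _; rfl
  have := (ZMod.intCast_zmod_eq_zero_iff_dvd _ m).mp (hcast.trans hT0)
  exact_mod_cast this



def Tp (p k f : ℕ) : ℤ := ∑ j ∈ range (p^f), (j:ℤ)^k

lemma mult_part (p k f : ℕ) (hp : 0 < p) (hf : 1 ≤ f) :
    ∑ j ∈ (range (p^f)).filter (fun j => p ∣ j), (j:ℤ)^k = (p:ℤ)^k * Tp p k (f-1) := by
  rw [Tp, Finset.mul_sum]
  symm
  refine Finset.sum_nbij' (fun i => p * i) (fun j => j / p) ?_ ?_ ?_ ?_ ?_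
  · intro i hi
    simp only [Finset.mem_filter, Finset.mem_range] at hi ⊢
    constructor
    · have hi' : i < p^(f-1) := by simpa using hi
      calc p * i < p * p^(f-1) := (Nat.mul_lt_mul_left hp).mpr hi'
        _ = p^f := by rw [← pow_succ']; congr 1; omega
    · exact Dvd.intro _ rfl
  · intro j hj
    simp only [Finset.mem_filter, Finset.mem_range] at hj ⊢
    refine (Nat.div_lt_iff_lt_mul hp).mpr ?_
    calc j < p^f := hj.1
      _ = p^(f-1) * p := by rw [← pow_succ]; congr 1; omega
  · intro i _; exact Nat.mul_div_cancel_left i hp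
  · intro j hj; exact Nat.mul_div_cancel' (Finset.mem_filter.mp hj).2
  · intro i _; push_cast; ring

lemma T_split (p k f : ℕ) (hp : 0 < p) (hf : 1 ≤ f) :
    Tp p k f = Up p k f + (p:ℤ)^k * Tp p k (f-1) := by
  rw [← mult_part p k f hp hf, Up, Tp]
  rw [← Finset.sum_filter_add_sum_filter_not (range (p^f)) (fun j => ¬ p ∣ j)]
  simp only [not_not]



lemma T_cong (p k : ℕ) (hp : p.Prime) (hodd : Odd p) (hdvd : (p-1) ∣ k) (hk : 2 ≤ k) :
    ∀ f, 1 ≤ f → (p:ℤ)^f ∣ Tp p k f + (p:ℤ)^(f-1) := by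
  intro f hf
  induction f, hf using Nat.le_induction with
  | base =>
      rw [T_split p k 1 hp.pos le_rfl]
      have h0 : Tp p k 0 = 0 := by
        simp [Tp, zero_pow (show k ≠ 0 by omega)]
      rw [h0, mul_zero, add_zero]
      exact U_cong p k hp hodd hdvd 1 le_rfl
  | succ f hf ih =>
      rw [T_split p k (f+1) hp.pos (by omega), show f+1-1 = f from rfl]
      have h1 : (p:ℤ)^(f+1) ∣ Up p k (f+1) + (p:ℤ)^f :=
        U_cong p k hp hodd hdvd (f+1) (by omega)
      have h2 : (p:ℤ)^(f-1) ∣ Tp p k f := by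
        have := dvd_sub (dvd_trans (pow_dvd_pow (p:ℤ) (by omega : f-1 ≤ f)) ih) (dvd_refl ((p:ℤ)^(f-1)))
        simpa using this
      have h3 : (p:ℤ)^(f+1) ∣ (p:ℤ)^k * Tp p k f := by
        obtain ⟨c, hc⟩ := h2
        refine dvd_trans (pow_dvd_pow (p:ℤ) (by omega : f+1 ≤ k + (f-1))) ⟨c, ?_⟩
        rw [pow_add, hc]; ring
      have := dvd_add h1 h3
      convert this using 1
      · rfl
      ring
lemma S_red (n d k : ℕ) (hd : d ∣ n) (hd0 : 0 < d) (hk : 0 < k) :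
    (d:ℤ) ∣ (S k n : ℤ) - (n/d : ℕ) * (∑ j ∈ range d, (j:ℤ)^k) := by
  have hS : (S k n : ℤ) = ∑ j ∈ range n, (j:ℤ)^k + (n:ℤ)^k := by
    have h1 : range (n+1) = insert 0 (Finset.Icc 1 n) := by
      ext j; simp [Nat.lt_succ_iff]; omega
    have h2 : ∑ j ∈ range (n+1), (j:ℤ)^k = (0:ℤ)^k + ∑ j ∈ Finset.Icc 1 n, (j:ℤ)^k := by
      rw [h1, Finset.sum_insert (by simp)]; norm_num
    rw [Finset.sum_range_succ] at h2
    rw [zero_pow (show k ≠ 0 by omega)] at h2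
    have : (S k n : ℤ) = ∑ j ∈ Finset.Icc 1 n, (j:ℤ)^k := by
      rw [S]; push_cast; rfl
    rw [this]; linarith [h2]
  rw [hS]
  obtain ⟨u, hu⟩ := id hd
  have hnd : n / d = u := by rw [hu]; exact Nat.mul_div_cancel_left u hd0
  have hmul : ∑ j ∈ range n, (j:ℤ)^k = ∑ t ∈ range u, ∑ i ∈ range d, ((t*d + i : ℕ):ℤ)^k := by
    rw [hu, mul_comm d u, sum_range_mul]
  have hterm : ∀ t i : ℕ, (d:ℤ) ∣ ((t*d + i : ℕ):ℤ)^k - (i:ℤ)^k := by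
    intro t i
    have h' : (d:ℤ) ∣ ((t*d+i : ℕ):ℤ) - (i:ℤ) := ⟨t, by push_cast; ring⟩
    exact Int.ModEq.dvd ((Int.modEq_iff_dvd.mpr h').pow k)
  have hsplit : ∑ t ∈ range u, ∑ i ∈ range d, (((t*d+i:ℕ):ℤ)^k - (i:ℤ)^k)
      = (∑ j ∈ range n, (j:ℤ)^k) - (u:ℤ) * (∑ i ∈ range d, (i:ℤ)^k) := by
    simp_rw [Finset.sum_sub_distrib]
    rw [← hmul, Finset.sum_const, Finset.card_range, nsmul_eq_mul]
  have hgoal : (∑ j ∈ range n, (j:ℤ)^k + (n:ℤ)^k) - ((n/d : ℕ):ℤ) * (∑ j ∈ range d, (j:ℤ)^k)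
      = (∑ t ∈ range u, ∑ i ∈ range d, (((t*d+i:ℕ):ℤ)^k - (i:ℤ)^k)) + (n:ℤ)^k := by
    rw [hsplit, hnd]; ring
  rw [hgoal]
  refine dvd_add (Finset.dvd_sum (fun t _ => Finset.dvd_sum (fun i _ => hterm t i))) ?_
  exact_mod_cast Int.natCast_dvd_natCast.mpr (dvd_pow hd (by omega))

lemma T_zero (p f k : ℕ) (hp : p.Prime) (hnd : ¬ (p-1) ∣ k) :
    (p:ℤ)^f ∣ Tp p k f := T_zero_aux p f k hp hnd

lemma S_red' (n d k : ℕ) (hd : d ∣ n) (hd0 : 0 < d) (hk : 0 < k) (f p : ℕ) (hdf : d = p^f) :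
    (d:ℤ) ∣ (S k n : ℤ) - (n/d : ℕ) * Tp p k f := by
  subst hdf
  exact S_red n (p^f) k hd hd0 hk



theorem half_dvd_powerSum_iff_of_two_mod_four (n k : ℕ) (hn : n % 4 = 2) (hk : 0 < k) :
    n / 2 ∣ S k n ↔ ∀ p : ℕ, p.Prime → Odd p → p ∣ n → ¬ (p - 1) ∣ k := by
  have hn2 : n = 2 * (n / 2) := by omega
  set m := n / 2 with hm
  have hm1 : m % 2 = 1 := by omega
  have hm0 : m ≠ 0 := by omega
  have hn0 : n ≠ 0 := by omega
  have hS0 : S k n ≠ 0 := by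
    have : 0 < S k n := by
      refine Finset.sum_pos (fun j hj => ?_) ⟨1, Finset.mem_Icc.mpr ⟨le_rfl, by omega⟩⟩
      exact pow_pos (Finset.mem_Icc.mp hj).1 k
    omega
  constructor
  · -- forward: m ∣ S → condition
    intro hdvdS p hp hpodd hpn hdk
    have hk2 : 2 ≤ k := by
      have hp3 : 3 ≤ p := by
        rcases hpodd with ⟨t, ht⟩
        have := hp.two_le; omega
      have := Nat.le_of_dvd hk hdk
      omega
    set f := n.factorization p with hf
    have hf1 : 1 ≤ f := hp.factorization_pos_of_dvd hn0 hpn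
    have hpfn : p^f ∣ n := Nat.ordProj_dvd n p
    have hpfm : p^f ∣ m := by
      have hcop : Nat.Coprime (p^f) 2 :=
        Nat.Coprime.pow_left _ (((Nat.coprime_primes hp Nat.prime_two).mpr
          (by rcases hpodd with ⟨t, ht⟩; omega)))
      exact hcop.dvd_of_dvd_mul_left (hn2 ▸ hpfn)
    have hu : ¬ p ∣ n / p^f := Nat.not_dvd_ordCompl hp hn0
    have hSdvd : (p:ℤ)^f ∣ (S k n : ℤ) := by
      have : (p^f : ℕ) ∣ S k n := dvd_trans hpfm hdvdS
      exact_mod_cast Int.natCast_dvd_natCast.mpr this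
    have hred := S_red' n (p^f) k hpfn (pow_pos hp.pos f) hk f p rfl
    push_cast at hred
    have huT : (p:ℤ)^f ∣ ((n/p^f : ℕ) : ℤ) * Tp p k f := by
      have := dvd_sub hSdvd hred
      simpa using this
    have hTc := T_cong p k hp hpodd hdk hk2 f hf1
    have hupf : (p:ℤ)^f ∣ ((n/p^f : ℕ) : ℤ) * (p:ℤ)^(f-1) := by
      have h1 : (p:ℤ)^f ∣ ((n/p^f : ℕ) : ℤ) * (Tp p k f + (p:ℤ)^(f-1)) :=
        Dvd.dvd.mul_left hTc _
      have := dvd_sub h1 huT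
      simpa [mul_add] using this
    have hpu : (p:ℤ) ∣ ((n/p^f : ℕ) : ℤ) := by
      have hpow : (p:ℤ)^f = (p:ℤ)^(f-1) * (p:ℤ) := by
        rw [← pow_succ]; congr 1; omega
      rw [hpow, mul_comm (((n/p^f : ℕ)):ℤ) _] at hupf
      exact (mul_dvd_mul_iff_left (a := (p:ℤ)^(f-1)) (pow_ne_zero _ (by exact_mod_cast hp.pos.ne'))).mp hupf
    exact hu (by exact_mod_cast hpu)
  · -- backward
    intro H
    rw [← Nat.factorization_le_iff_dvd hm0 hS0]
    intro p
    set f := m.factorization p with hf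
    rcases Nat.eq_zero_or_pos f with hf0 | hf1
    · simp [← hf, hf0]
    have hp : p.Prime := Nat.prime_of_mem_primeFactors
      ((Nat.support_factorization m) ▸ Finsupp.mem_support_iff.mpr (show m.factorization p ≠ 0 by omega))
    have hpm : p ∣ m := Nat.dvd_of_factorization_pos (by omega)
    have hpodd : Odd p := by
      rcases Nat.even_or_odd p with he | ho
      · exfalso
        obtain ⟨t, ht⟩ := he
        have : 2 ∣ m := dvd_trans ⟨t, by omega⟩ hpm
        omega
      · exact ho
    have hpn : p ∣ n := hpm.trans ⟨2, by omega⟩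
    have hnd := H p hp hpodd hpn
    have hpfm : p^f ∣ m := Nat.ordProj_dvd m p
    have hpfn : p^f ∣ n := hpfm.trans ⟨2, by omega⟩
    have hred := S_red' n (p^f) k hpfn (pow_pos hp.pos f) hk f p rfl
    push_cast at hred
    have hT := T_zero p f k hp hnd
    have : (p:ℤ)^f ∣ (S k n : ℤ) := by
      have h2 : (p:ℤ)^f ∣ ((n/p^f : ℕ) : ℤ) * Tp p k f := Dvd.dvd.mul_left hT _
      have := dvd_add hred h2
      push_cast at this ⊢
      simpa using this
    have : p^f ∣ S k n := by exact_mod_cast this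
    exact (hp.pow_dvd_iff_le_factorization hS0).mp this
end

section
/- Let a and b be positive integers with a even and b odd. Then for every positive integer n, n divides S_{an+b}(n) if and only if n is not congruent to 2 modulo 4. -/
open Finset

private lemma sum_modEq (s : Finset ℕ) (f g : ℕ → ℤ) (n : ℤ)
    (h : ∀ j ∈ s, f j ≡ g j [ZMOD n]) :
    (∑ j ∈ s, f j) ≡ ∑ j ∈ s, g j [ZMOD n] := by
  rw [Int.modEq_iff_dvd, ← Finset.sum_sub_distrib]
  exact Finset.dvd_sum fun j hj => Int.ModEq.dvd (h j hj)

private lemma S_modEq (k n : ℕ) (hk : 0 < k) :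
    ((S k n : ℤ)) ≡ ∑ j ∈ range n, (j : ℤ) ^ k [ZMOD (n : ℤ)] := by
  have h1 : (S k n : ℤ) = ∑ j ∈ range (n + 1), (j : ℤ) ^ k := by
    have : S k n = ∑ j ∈ range (n + 1), j ^ k := by
      unfold S
      rw [range_eq_Ico, ← Finset.sum_Ico_consecutive _ (Nat.zero_le 1) (by omega)]
      have h0 : ∑ j ∈ Ico 0 1, j ^ k = 0 := by
        simp [Nat.zero_pow hk]
      rw [h0, Finset.Ico_add_one_right_eq_Icc, zero_add]
    rw [this]
    push_cast
    rfl
  rw [h1, Finset.sum_range_succ]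
  have : ((n : ℤ)) ^ k ≡ 0 [ZMOD (n : ℤ)] := by
    rw [Int.modEq_zero_iff_dvd]
    exact dvd_pow_self _ hk.ne'
  simpa using (Int.ModEq.refl (∑ j ∈ range n, (j : ℤ) ^ k)).add this

-- sum over range m of ((m:ℤ) - j)^k equals sum over range m of (j+1)^k, by reflection
private lemma reflect_sum (k m : ℕ) :
    ∑ j ∈ range m, ((m : ℤ) - j) ^ k = ∑ j ∈ range m, ((j : ℤ) + 1) ^ k := by
  have h := Finset.sum_range_reflect (fun j => ((j + 1 : ℕ) : ℤ) ^ k) m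
  have h2 : ∑ j ∈ range m, ((m : ℤ) - j) ^ k
      = ∑ j ∈ range m, ((m - 1 - j + 1 : ℕ) : ℤ) ^ k := by
    apply Finset.sum_congr rfl
    intro j hj
    rw [Finset.mem_range] at hj
    congr 1
    have : m - 1 - j + 1 = m - j := by omega
    rw [this]
    push_cast [Nat.cast_sub hj.le]
    ring
  rw [h2, h]
  apply Finset.sum_congr rfl
  intro j _
  push_cast
  ring

private lemma shifted_sum (k n : ℕ) (hk : 0 < k) :
    ∑ j ∈ range n, ((j : ℤ) + 1) ^ k = (∑ j ∈ range n, (j : ℤ) ^ k) + (n : ℤ) ^ k := by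
  have h := Finset.sum_range_succ' (fun j => (j : ℤ) ^ k) n
  rw [Finset.sum_range_succ] at h
  have h0 : ((0 : ℕ) : ℤ) ^ k = 0 := by simp [zero_pow hk.ne']
  rw [h0, add_zero] at h
  have : ∑ j ∈ range n, ((j : ℤ) + 1) ^ k = ∑ i ∈ range n, ((i + 1 : ℕ) : ℤ) ^ k := by
    apply Finset.sum_congr rfl; intro j _; push_cast; ring
  rw [this, h]

theorem affine_even_odd (a b : ℕ) (ha : 0 < a) (hb : 0 < b) (hae : Even a) (hbo : Odd b) :
    ∀ n : ℕ, 0 < n → (n ∣ S (a * n + b) n ↔ n % 4 ≠ 2) := by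
  intro n hn
  set k := a * n + b with hkdef
  have hko : Odd k := (hae.mul_right n).add_odd hbo
  have hk1 : 0 < k := by omega
  have hk2 : 2 ≤ k := by
    obtain ⟨r, hr⟩ := hae
    have hr1 : 1 ≤ r := by omega
    have : 2 * 1 ≤ a * n := Nat.mul_le_mul (by omega) hn
    omega
  -- reduce to divisibility of U := ∑_{j<n} j^k in ℤ
  set U : ℤ := ∑ j ∈ range n, (j : ℤ) ^ k with hU
  have hcast : n ∣ S k n ↔ (n : ℤ) ∣ U := by
    rw [← Int.natCast_dvd_natCast, ← Int.modEq_zero_iff_dvd, ← Int.modEq_zero_iff_dvd]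
    constructor
    · intro h; exact (S_modEq k n hk1).symm.trans h
    · intro h; exact (S_modEq k n hk1).trans h
  rw [hcast]
  rcases Nat.even_or_odd n with he | ho
  · -- even case: n = m + m
    obtain ⟨m, hm⟩ := he
    -- U ≡ -(m^k) [ZMOD n]
    have hsplit : U = (∑ j ∈ range m, (j : ℤ) ^ k) + ∑ j ∈ range m, ((m + j : ℕ) : ℤ) ^ k := by
      rw [hU, hm, Finset.sum_range_add]
    have hB : (∑ j ∈ range m, ((m + j : ℕ) : ℤ) ^ k)
        ≡ ∑ j ∈ range m, (-(((m : ℤ) - j) ^ k)) [ZMOD (n : ℤ)] := by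
      apply sum_modEq
      intro j _
      have hbase : ((m + j : ℕ) : ℤ) ≡ -((m : ℤ) - j) [ZMOD (n : ℤ)] := by
        rw [Int.modEq_iff_dvd]
        refine ⟨-1, ?_⟩
        push_cast [hm]
        ring
      calc ((m + j : ℕ) : ℤ) ^ k ≡ (-((m : ℤ) - j)) ^ k [ZMOD (n : ℤ)] := hbase.pow k
        _ = -(((m : ℤ) - j) ^ k) := hko.neg_pow _
    have hC : ∑ j ∈ range m, (-(((m : ℤ) - j) ^ k))
        = -((∑ j ∈ range m, (j : ℤ) ^ k) + (m : ℤ) ^ k) := by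
      rw [Finset.sum_neg_distrib, reflect_sum, shifted_sum k m hk1]
    have hUmod : U ≡ -((m : ℤ) ^ k) [ZMOD (n : ℤ)] := by
      calc U = (∑ j ∈ range m, (j : ℤ) ^ k) + ∑ j ∈ range m, ((m + j : ℕ) : ℤ) ^ k := hsplit
        _ ≡ (∑ j ∈ range m, (j : ℤ) ^ k) + ∑ j ∈ range m, (-(((m : ℤ) - j) ^ k))
            [ZMOD (n : ℤ)] := (Int.ModEq.refl _).add hB
        _ = -((m : ℤ) ^ k) := by rw [hC]; ring
    have hdvd_iff : (n : ℤ) ∣ U ↔ n ∣ m ^ k := by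
      rw [← Int.natCast_dvd_natCast]
      push_cast
      rw [← Int.modEq_zero_iff_dvd, ← Int.modEq_zero_iff_dvd]
      constructor
      · intro h
        have := (hUmod.symm.trans h).neg
        simpa using this
      · intro h
        exact hUmod.trans (by simpa using h.neg)
    rw [hdvd_iff]
    have hmpos : 0 < m := by omega
    -- n ∣ m ^ k ↔ Even m
    have key : n ∣ m ^ k ↔ m % 2 = 0 := by
      constructor
      · intro h
        have h1 : m * 2 ∣ m * m ^ (k - 1) := by
          have : m ^ k = m * m ^ (k - 1) := by
            conv_lhs => rw [show k = 1 + (k - 1) by omega]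
            rw [pow_add, pow_one]
          rw [← this]
          rw [hm] at h
          calc m * 2 = m + m := by ring
            _ ∣ m ^ k := h
        have h2 : 2 ∣ m ^ (k - 1) := (mul_dvd_mul_iff_left hmpos.ne').mp h1
        have h3 : 2 ∣ m := Nat.Prime.dvd_of_dvd_pow Nat.prime_two h2
        omega
      · intro h
        obtain ⟨t, ht⟩ : ∃ t, m = 2 * t := ⟨m / 2, by omega⟩
        refine ⟨t * m ^ (k - 2), ?_⟩
        calc m ^ k = m ^ 2 * m ^ (k - 2) := by
              rw [← pow_add]; congr 1; omega
          _ = n * (t * m ^ (k - 2)) := by rw [hm, ht]; ring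
    rw [key]
    omega
  · -- odd case: both sides hold
    have hn4 : n % 4 ≠ 2 := by
      have := Nat.odd_iff.mp ho
      omega
    simp only [hn4, iff_true, ne_eq, not_false_eq_true]
    -- show n ∣ U
    have hrefl : ∑ j ∈ range n, ((n : ℤ) - 1 - j) ^ k = U := by
      have h := Finset.sum_range_reflect (fun j => ((j : ℕ) : ℤ) ^ k) n
      rw [hU, ← h]
      apply Finset.sum_congr rfl
      intro j hj
      rw [Finset.mem_range] at hj
      congr 1
      push_cast [Nat.cast_sub (by omega : j ≤ n - 1), Nat.cast_sub (by omega : 1 ≤ n)]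
      ring
    have hmod : U ≡ -U [ZMOD (n : ℤ)] := by
      have step1 : ∑ j ∈ range n, ((n : ℤ) - 1 - j) ^ k
          ≡ ∑ j ∈ range n, (-(((j : ℤ) + 1) ^ k)) [ZMOD (n : ℤ)] := by
        apply sum_modEq
        intro j _
        have hbase : ((n : ℤ) - 1 - j) ≡ -((j : ℤ) + 1) [ZMOD (n : ℤ)] := by
          rw [Int.modEq_iff_dvd]
          exact ⟨-1, by ring⟩
        calc ((n : ℤ) - 1 - j) ^ k ≡ (-((j : ℤ) + 1)) ^ k [ZMOD (n : ℤ)] := hbase.pow k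
          _ = -(((j : ℤ) + 1) ^ k) := hko.neg_pow _
      have step2 : ∑ j ∈ range n, (-(((j : ℤ) + 1) ^ k)) = -(U + (n : ℤ) ^ k) := by
        rw [Finset.sum_neg_distrib, shifted_sum k n hk1]
      have hnk : (-(U + (n : ℤ) ^ k)) ≡ -U [ZMOD (n : ℤ)] := by
        have : ((n : ℤ)) ^ k ≡ 0 [ZMOD (n : ℤ)] := by
          rw [Int.modEq_zero_iff_dvd]; exact dvd_pow_self _ hk1.ne'
        have := ((Int.ModEq.refl U).add this).neg
        simpa using this
      calc U = ∑ j ∈ range n, ((n : ℤ) - 1 - j) ^ k := hrefl.symm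
        _ ≡ ∑ j ∈ range n, (-(((j : ℤ) + 1) ^ k)) [ZMOD (n : ℤ)] := step1
        _ = -(U + (n : ℤ) ^ k) := step2
        _ ≡ -U [ZMOD (n : ℤ)] := hnk
    have h2U : (n : ℤ) ∣ 2 * U := by
      have := Int.ModEq.dvd hmod
      have heq : -U - U = -(2 * U) := by ring
      rw [heq] at this
      exact (dvd_neg).mp this
    have hcop : IsCoprime (n : ℤ) 2 := by
      have hc : Nat.Coprime n 2 :=
        Nat.coprime_comm.mp (Nat.prime_two.coprime_iff_not_dvd.mpr
          (by have := Nat.odd_iff.mp ho; omega))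
      have := Nat.isCoprime_iff_coprime.mpr hc
      exact_mod_cast this
    exact hcop.dvd_of_dvd_mul_left h2U
end
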